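/- The bubble functions solve the critical integral equation: let n ≥ 1, 0 < s < n/2, 0 < σ < n, and set Q(x) = c₀ (1/(1+|x|²))^{(n-2s)/2} with c₀ = (R_{2s,n} I(σ/2) I((n-2s)/2))^{-(n-2s)/(2(n+2s-σ))}. Then Q satisfies Q(x) = ∫_{ℝⁿ} R_{2s,n}/|x-y|^{n-2s} (∫_{ℝⁿ} Q(z)^{(2n-σ)/(n-2s)}/|y-z|^{σ} dz) Q(y)^{(n+2s-σ)/(n-2s)} dy for all x ∈ ℝⁿ. -/

import Mathlib

open MeasureTheory Real

/-- The Riesz potential normalization constant `R_{γ,n} = Γ((n-γ)/2)/(π^{n/2} 2^γ Γ(γ/2))`. -/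
noncomputable def rieszConst (n : ℕ) (γ : ℝ) : ℝ :=
  Real.Gamma (((n : ℝ) - γ) / 2) /
    (Real.pi ^ ((n : ℝ) / 2) * (2 : ℝ) ^ γ * Real.Gamma (γ / 2))

/-- `I(γ) := π^{n/2} Γ((n-2γ)/2)/Γ(n-γ)` for `0 < γ < n/2`. -/
noncomputable def bubbleI (n : ℕ) (γ : ℝ) : ℝ :=
  Real.pi ^ ((n : ℝ) / 2) * Real.Gamma (((n : ℝ) - 2 * γ) / 2) / Real.Gamma ((n : ℝ) - γ)

/-- The standard bubble `Q(x) = c₀ (1/(1+|x|²))^{(n-2s)/2}`, with the normalization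
`c₀ = (R_{2s,n} I(σ/2) I((n-2s)/2))^{-(n-2s)/(2(n+2s-σ))}`. -/
noncomputable def bubbleQ (n : ℕ) (s σ : ℝ) (x : EuclideanSpace ℝ (Fin n)) : ℝ :=
  (rieszConst n (2 * s) * bubbleI n (σ / 2) * bubbleI n (((n : ℝ) - 2 * s) / 2)) ^
      (-(((n : ℝ) - 2 * s) / (2 * ((n : ℝ) + 2 * s - σ)))) *
    (1 / (1 + ‖x‖ ^ 2)) ^ (((n : ℝ) - 2 * s) / 2)

/-!
Schwinger parametrisation: writing `Γ(γ) |x - y|^(-2γ)` and `Γ(n - γ) (1 + |y|²)^(-(n - γ))` as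
Laplace integrals of Gaussians, the `y`-integral becomes an explicit Gaussian integral, and the
remaining `(t, s)`-integral is reduced by `t = s u` to a Gamma integral in `s` and a Beta integral
in `u`, giving `∫ |x - y|^(-2γ) (1 + |y|²)^(-(n - γ)) dy = I(γ) (1 + |x|²)^(-γ)`. All
interchanges are done for lower Lebesgue integrals, where Tonelli needs no integrability. Applying the formula with
`γ = σ/2` to the inner integral and with `γ = (n - 2s)/2` to the outer one turns the right-hand
side into a constant multiple of `Q`, and `c₀` is exactly the fixed point making that constant 1.
-/

open Set

lemma bubbleI_pos {n : ℕ} {γ : ℝ} (h : 2 * γ < n) : 0 < bubbleI n γ := by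
  have h₁ : 0 < Gamma (((n : ℝ) - 2 * γ) / 2) := Gamma_pos_of_pos (by linarith)
  have h₂ : 0 < Gamma ((n : ℝ) - γ) :=
    Gamma_pos_of_pos (by rcases le_or_gt 0 γ with hγ | hγ <;> linarith [n.cast_nonneg (α := ℝ)])
  unfold bubbleI
  positivity

lemma rieszConst_pos {n : ℕ} {γ : ℝ} (h₀ : 0 < γ) (h : γ < n) : 0 < rieszConst n γ := by
  have h₁ : 0 < Gamma (((n : ℝ) - γ) / 2) := Gamma_pos_of_pos (by linarith)
  have h₂ : 0 < Gamma (γ / 2) := Gamma_pos_of_pos (by linarith)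
  unfold rieszConst
  positivity

lemma lintegral_ofReal_const_mul {α : Type*} [MeasurableSpace α] (μ : Measure α) {c : ℝ}
    (hc : 0 ≤ c) (f : α → ℝ) :
    ∫⁻ a, ENNReal.ofReal (c * f a) ∂μ = ENNReal.ofReal c * ∫⁻ a, ENNReal.ofReal (f a) ∂μ := by
  simp_rw [ENNReal.ofReal_mul hc]
  exact lintegral_const_mul' _ _ ENNReal.ofReal_ne_top

lemma lintegral_Ioi_comp_mul_left {f : ℝ → ENNReal} (hf : Measurable f) {c : ℝ} (hc : 0 < c) :
    ∫⁻ t in Ioi 0, f t = ENNReal.ofReal c * ∫⁻ u in Ioi 0, f (c * u) := by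
  have hpre : (c * ·) ⁻¹' Ioi 0 = Ioi 0 := by
    ext u; simp [hc]
  have h := setLIntegral_map (μ := volume) (measurableSet_Ioi (a := (0 : ℝ))) hf
    (measurable_const_mul c)
  rw [hpre, Real.map_volume_mul_left hc.ne', Measure.restrict_smul, lintegral_smul_measure,
    abs_of_pos (inv_pos.2 hc)] at h
  rw [← h, smul_eq_mul, ← mul_assoc, ← ENNReal.ofReal_mul hc.le, mul_inv_cancel₀ hc.ne',
    ENNReal.ofReal_one, one_mul]

lemma lintegral_rpow_mul_exp_neg_mul_Ioi {p a : ℝ} (hp : 0 < p) (ha : 0 < a) :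
    ∫⁻ t in Ioi 0, ENNReal.ofReal (t ^ (p - 1) * exp (-(a * t))) =
      ENNReal.ofReal (a ^ (-p) * Gamma p) := by
  rw [rpow_neg ha.le, ← inv_rpow ha.le, ← one_div, ← integral_rpow_mul_exp_neg_mul_Ioi hp ha,
    ofReal_integral_eq_lintegral_ofReal]
  · refine IntegrableOn.integrable ?_
    simpa using integrableOn_rpow_mul_exp_neg_mul_rpow (p := 1) (by linarith : -1 < p - 1)
      one_pos ha
  · filter_upwards [ae_restrict_mem measurableSet_Ioi] with t (ht : 0 < t)
    positivity

lemma lintegral_rpow_mul_one_add_rpow_neg_Ioi {γ q : ℝ} (hγ : 0 < γ) (hq : γ < q) :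
    ∫⁻ v in Ioi 0, ENNReal.ofReal (v ^ (γ - 1) * (1 + v) ^ (-q)) =
      ENNReal.ofReal (Gamma γ * Gamma (q - γ) / Gamma q) := by
  have hΓ : 0 < Gamma q := Gamma_pos_of_pos (hγ.trans hq)
  rw [← ENNReal.mul_right_inj (ENNReal.ofReal_pos.2 hΓ).ne' ENNReal.ofReal_ne_top]
  calc ENNReal.ofReal (Gamma q) * ∫⁻ v in Ioi 0, ENNReal.ofReal (v ^ (γ - 1) * (1 + v) ^ (-q))
      = ∫⁻ v in Ioi 0, ∫⁻ s in Ioi 0,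
          ENNReal.ofReal (v ^ (γ - 1) * (s ^ (q - 1) * exp (-((1 + v) * s)))) := by
        rw [← lintegral_const_mul' _ _ ENNReal.ofReal_ne_top]
        refine setLIntegral_congr_fun measurableSet_Ioi fun v (hv : 0 < v) => ?_
        rw [lintegral_ofReal_const_mul _ (by positivity),
          lintegral_rpow_mul_exp_neg_mul_Ioi (hγ.trans hq) (by positivity),
          ← ENNReal.ofReal_mul hΓ.le, ← ENNReal.ofReal_mul (by positivity)]
        ring_nf
    _ = ∫⁻ s in Ioi 0, ∫⁻ v in Ioi 0,
          ENNReal.ofReal (s ^ (q - 1) * exp (-s) * (v ^ (γ - 1) * exp (-(s * v)))) := by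
        rw [lintegral_lintegral_swap (by fun_prop)]
        refine lintegral_congr fun s => lintegral_congr fun v => ?_
        rw [show -((1 + v) * s) = -s + -(s * v) by ring, exp_add]
        ring_nf
    _ = ∫⁻ s in Ioi 0, ENNReal.ofReal (Gamma γ * (s ^ (q - γ - 1) * exp (-(1 * s)))) := by
        refine setLIntegral_congr_fun measurableSet_Ioi fun s (hs : 0 < s) => ?_
        rw [lintegral_ofReal_const_mul _ (by positivity), lintegral_rpow_mul_exp_neg_mul_Ioi hγ hs,
          ← ENNReal.ofReal_mul (by positivity), show q - γ - 1 = q - 1 + -γ by ring,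
          rpow_add hs, one_mul]
        ring_nf
    _ = ENNReal.ofReal (Gamma q) * ENNReal.ofReal (Gamma γ * Gamma (q - γ) / Gamma q) := by
        rw [lintegral_ofReal_const_mul _ (Gamma_pos_of_pos hγ).le,
          lintegral_rpow_mul_exp_neg_mul_Ioi (by linarith) one_pos, one_rpow, one_mul,
          ← ENNReal.ofReal_mul (Gamma_pos_of_pos hγ).le, ← ENNReal.ofReal_mul hΓ.le]
        congr 1
        field_simp

lemma lintegral_rpow_mul_one_add_mul_rpow_neg_Ioi {γ q c : ℝ} (hγ : 0 < γ) (hq : γ < q)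
    (hc : 0 < c) :
    ∫⁻ u in Ioi 0, ENNReal.ofReal (u ^ (γ - 1) * (1 + c * u) ^ (-q)) =
      ENNReal.ofReal (c ^ (-γ) * (Gamma γ * Gamma (q - γ) / Gamma q)) := by
  have hc' : 0 < c⁻¹ := inv_pos.2 hc
  rw [lintegral_Ioi_comp_mul_left (by fun_prop) hc']
  have hpt : ∀ v ∈ Ioi (0 : ℝ), ENNReal.ofReal ((c⁻¹ * v) ^ (γ - 1) * (1 + c * (c⁻¹ * v)) ^ (-q)) =
      ENNReal.ofReal (c⁻¹ ^ (γ - 1) * (v ^ (γ - 1) * (1 + v) ^ (-q))) := by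
    intro v (hv : 0 < v)
    rw [mul_rpow hc'.le hv.le, mul_inv_cancel_left₀ hc.ne', mul_assoc]
  rw [setLIntegral_congr_fun measurableSet_Ioi hpt, lintegral_ofReal_const_mul _ (by positivity),
    lintegral_rpow_mul_one_add_rpow_neg_Ioi hγ hq, ← ENNReal.ofReal_mul (by positivity),
    ← ENNReal.ofReal_mul hc'.le, ← mul_assoc, ← rpow_one_add' hc'.le (by linarith),
    add_sub_cancel, inv_rpow hc.le, ← rpow_neg hc.le]

lemma lintegral_Ioi_lintegral_Ioi_schwinger {γ q a : ℝ} (hγ : 0 < γ) (hγq : 2 * γ < q)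
    (ha : 0 ≤ a) :
    ∫⁻ t in Ioi 0, ∫⁻ s in Ioi 0, ENNReal.ofReal (t ^ (γ - 1) * s ^ (q - γ - 1) * exp (-s) *
        ((π / (t + s)) ^ (q / 2) * exp (-(t * s / (t + s) * a)))) =
      ENNReal.ofReal (π ^ (q / 2) * Gamma γ * Gamma (q / 2 - γ) * (1 + a) ^ (-γ)) := by
  have hscale : ∀ s > (0 : ℝ), ∀ u > (0 : ℝ),
      s * ((s * u) ^ (γ - 1) * s ^ (q - γ - 1) * exp (-s) *
        ((π / (s * u + s)) ^ (q / 2) * exp (-(s * u * s / (s * u + s) * a)))) =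
      π ^ (q / 2) * (u ^ (γ - 1) * (1 + u) ^ (-(q / 2))) *
        (s ^ (q / 2 - 1) * exp (-((1 + (1 + a) * u) / (1 + u) * s))) := by
    intro s hs u hu
    have hpow : s * s ^ (γ - 1) * s ^ (q - γ - 1) = s ^ (q / 2 - 1) * s ^ (q / 2) := by
      rw [← rpow_one_add' hs.le (by linarith), ← rpow_add hs, ← rpow_add hs]
      ring_nf
    have hexp : exp (-s) * exp (-(s * u * s / (s * u + s) * a)) =
        exp (-((1 + (1 + a) * u) / (1 + u) * s)) := by
      rw [← exp_add]
      congr 1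
      field_simp
      ring
    calc _ = (s * s ^ (γ - 1) * s ^ (q - γ - 1)) * u ^ (γ - 1) * π ^ (q / 2) *
          ((s * (1 + u)) ^ (q / 2))⁻¹ * (exp (-s) * exp (-(s * u * s / (s * u + s) * a))) := by
          rw [mul_rpow hs.le hu.le, div_rpow pi_pos.le (by positivity),
            show s * u + s = s * (1 + u) by ring]
          ring
      _ = _ := by
          have : (0 : ℝ) < s ^ (q / 2) := by positivity
          rw [hpow, hexp, mul_rpow hs.le (by positivity), rpow_neg (by positivity)]
          field_simp
  calc _ = ∫⁻ s in Ioi 0, ∫⁻ t in Ioi 0, ENNReal.ofReal (t ^ (γ - 1) * s ^ (q - γ - 1) *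
          exp (-s) * ((π / (t + s)) ^ (q / 2) * exp (-(t * s / (t + s) * a)))) :=
        lintegral_lintegral_swap (by fun_prop)
    _ = ∫⁻ s in Ioi 0, ∫⁻ u in Ioi 0, ENNReal.ofReal (π ^ (q / 2) *
          (u ^ (γ - 1) * (1 + u) ^ (-(q / 2))) *
          (s ^ (q / 2 - 1) * exp (-((1 + (1 + a) * u) / (1 + u) * s)))) := by
        refine setLIntegral_congr_fun measurableSet_Ioi fun s (hs : 0 < s) => ?_
        rw [lintegral_Ioi_comp_mul_left (by fun_prop) hs, ← lintegral_ofReal_const_mul _ hs.le]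
        exact setLIntegral_congr_fun measurableSet_Ioi fun u hu => congrArg _ (hscale s hs u hu)
    _ = ∫⁻ u in Ioi 0, ENNReal.ofReal (π ^ (q / 2) * Gamma (q / 2) *
          (u ^ (γ - 1) * (1 + (1 + a) * u) ^ (-(q / 2)))) := by
        rw [lintegral_lintegral_swap (by fun_prop)]
        refine setLIntegral_congr_fun measurableSet_Ioi fun u (hu : 0 < u) => ?_
        rw [lintegral_ofReal_const_mul _ (by positivity),
          lintegral_rpow_mul_exp_neg_mul_Ioi (by linarith) (by positivity),
          ← ENNReal.ofReal_mul (by positivity), div_rpow (by positivity) (by positivity)]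
        have : (0 : ℝ) < (1 + u) ^ (-(q / 2)) := by positivity
        congr 1
        field_simp
    _ = _ := by
        have hΓ : 0 < Gamma (q / 2) := Gamma_pos_of_pos (by linarith)
        have hΓ' : 0 < Gamma (q / 2 - γ) := Gamma_pos_of_pos (by linarith)
        have : 0 < Gamma γ := Gamma_pos_of_pos hγ
        rw [lintegral_ofReal_const_mul _ (by positivity),
          lintegral_rpow_mul_one_add_mul_rpow_neg_Ioi hγ (by linarith) (by linarith),
          ← ENNReal.ofReal_mul (by positivity)]
        congr 1
        field_simp

section InnerProductSpace

variable {V : Type*} [NormedAddCommGroup V] [InnerProductSpace ℝ V]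

lemma mul_norm_sub_sq_add_mul_norm_sq {t s : ℝ} (hts : t + s ≠ 0) (x y : V) :
    t * ‖x - y‖ ^ 2 + s * ‖y‖ ^ 2 =
      (t + s) * ‖y - (t / (t + s)) • x‖ ^ 2 + t * s / (t + s) * ‖x‖ ^ 2 := by
  rw [norm_sub_sq_real, norm_sub_sq_real, real_inner_smul_right, norm_smul, mul_pow,
    Real.norm_eq_abs, sq_abs, real_inner_comm]
  field_simp
  ring

variable [FiniteDimensional ℝ V] [MeasurableSpace V] [BorelSpace V]

lemma lintegral_exp_neg_mul_norm_sub_sq {b : ℝ} (hb : 0 < b) (a : V) :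
    ∫⁻ y : V, ENNReal.ofReal (exp (-(b * ‖y - a‖ ^ 2))) =
      ENNReal.ofReal ((π / b) ^ ((Module.finrank ℝ V : ℝ) / 2)) := by
  have h : ∫ y : V, exp (-(b * ‖y - a‖ ^ 2)) = (π / b) ^ ((Module.finrank ℝ V : ℝ) / 2) := by
    rw [integral_sub_right_eq_self (fun y => exp (-(b * ‖y‖ ^ 2))) a]
    simpa only [neg_mul] using GaussianFourier.integral_rexp_neg_mul_sq_norm (V := V) hb
  rw [← h, ofReal_integral_eq_lintegral_ofReal]
  · exact Integrable.of_integral_ne_zero (by rw [h]; positivity)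
  · exact .of_forall fun y => (exp_pos _).le

lemma lintegral_exp_neg_mul_norm_sub_sq_add_mul_norm_sq {t s : ℝ} (ht : 0 < t) (hs : 0 < s)
    (x : V) :
    ∫⁻ y : V, ENNReal.ofReal (exp (-(t * ‖x - y‖ ^ 2 + s * ‖y‖ ^ 2))) =
      ENNReal.ofReal ((π / (t + s)) ^ ((Module.finrank ℝ V : ℝ) / 2) *
        exp (-(t * s / (t + s) * ‖x‖ ^ 2))) := by
  have hsplit : ∀ y : V, exp (-(t * ‖x - y‖ ^ 2 + s * ‖y‖ ^ 2)) =
      exp (-(t * s / (t + s) * ‖x‖ ^ 2)) * exp (-((t + s) * ‖y - (t / (t + s)) • x‖ ^ 2)) := by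
    intro y
    rw [mul_norm_sub_sq_add_mul_norm_sq (by positivity) x y, neg_add, exp_add, mul_comm]
  simp_rw [hsplit]
  rw [lintegral_ofReal_const_mul _ (exp_pos _).le,
    lintegral_exp_neg_mul_norm_sub_sq (by positivity),
    ← ENNReal.ofReal_mul (exp_pos _).le, mul_comm]

theorem lintegral_one_add_norm_sq_rpow_neg_div_norm_sub_rpow {γ : ℝ} (hγ : 0 < γ)
    (hγn : 2 * γ < Module.finrank ℝ V) (x : V) :
    ∫⁻ y : V, ENNReal.ofReal
        ((1 + ‖y‖ ^ 2) ^ (-(Module.finrank ℝ V - γ)) / ‖x - y‖ ^ (2 * γ)) =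
      ENNReal.ofReal (bubbleI (Module.finrank ℝ V) γ * (1 + ‖x‖ ^ 2) ^ (-γ)) := by
  set n := Module.finrank ℝ V
  have : Nontrivial V := Module.finrank_pos_iff (R := ℝ).1 (by
    have : (0 : ℝ) < n := by linarith
    exact_mod_cast this)
  have hae : ∀ᵐ y : V, y ≠ x := by simp [ae_iff, measure_singleton]
  have hΓ₁ : 0 < Gamma γ := Gamma_pos_of_pos hγ
  have hΓ₂ : 0 < Gamma (n - γ) := Gamma_pos_of_pos (by linarith)
  rw [← ENNReal.mul_right_inj (ENNReal.ofReal_pos.2 (mul_pos hΓ₁ hΓ₂)).ne' ENNReal.ofReal_ne_top]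
  calc ENNReal.ofReal (Gamma γ * Gamma (n - γ)) *
        ∫⁻ y : V, ENNReal.ofReal ((1 + ‖y‖ ^ 2) ^ (-(n - γ)) / ‖x - y‖ ^ (2 * γ))
      = ∫⁻ y : V, ∫⁻ t in Ioi 0, ∫⁻ s in Ioi 0,
          ENNReal.ofReal (t ^ (γ - 1) * exp (-(‖x - y‖ ^ 2 * t))) *
          ENNReal.ofReal (s ^ (n - γ - 1) * exp (-((1 + ‖y‖ ^ 2) * s))) := by
        rw [← lintegral_const_mul' _ _ ENNReal.ofReal_ne_top]
        refine lintegral_congr_ae ?_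
        filter_upwards [hae] with y hy
        have hxy : 0 < ‖x - y‖ := norm_pos_iff.2 (sub_ne_zero.2 hy.symm)
        rw [lintegral_lintegral_mul (by fun_prop) (by fun_prop),
          lintegral_rpow_mul_exp_neg_mul_Ioi hγ (by positivity),
          lintegral_rpow_mul_exp_neg_mul_Ioi (by linarith) (by positivity),
          ← ENNReal.ofReal_mul (by positivity), ← ENNReal.ofReal_mul (by positivity)]
        congr 1
        have hsq : ‖x - y‖ ^ (2 * γ) = (‖x - y‖ ^ 2) ^ γ := by
          rw [← rpow_natCast, ← rpow_mul hxy.le, Nat.cast_ofNat]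
        rw [hsq, rpow_neg (sq_nonneg ‖x - y‖)]
        field_simp
    _ = ∫⁻ t in Ioi 0, ∫⁻ s in Ioi 0, ∫⁻ y : V,
          ENNReal.ofReal (t ^ (γ - 1) * exp (-(‖x - y‖ ^ 2 * t))) *
          ENNReal.ofReal (s ^ (n - γ - 1) * exp (-((1 + ‖y‖ ^ 2) * s))) := by
        rw [lintegral_lintegral_swap ((Measurable.lintegral_prod_right' (f := fun p : (V × ℝ) × ℝ =>
          ENNReal.ofReal (p.1.2 ^ (γ - 1) * exp (-(‖x - p.1.1‖ ^ 2 * p.1.2))) *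
          ENNReal.ofReal (p.2 ^ (n - γ - 1) * exp (-((1 + ‖p.1.1‖ ^ 2) * p.2))))
          (by fun_prop)).aemeasurable)]
        exact lintegral_congr fun t => lintegral_lintegral_swap (by fun_prop)
    _ = ∫⁻ t in Ioi 0, ∫⁻ s in Ioi 0, ENNReal.ofReal (t ^ (γ - 1) * s ^ (n - γ - 1) * exp (-s) *
          ((π / (t + s)) ^ ((n : ℝ) / 2) * exp (-(t * s / (t + s) * ‖x‖ ^ 2)))) := by
        refine setLIntegral_congr_fun measurableSet_Ioi fun t (ht : 0 < t) => ?_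
        refine setLIntegral_congr_fun measurableSet_Ioi fun s (hs : 0 < s) => ?_
        have hpt : ∀ y : V, ENNReal.ofReal (t ^ (γ - 1) * exp (-(‖x - y‖ ^ 2 * t))) *
            ENNReal.ofReal (s ^ (n - γ - 1) * exp (-((1 + ‖y‖ ^ 2) * s))) =
            ENNReal.ofReal (t ^ (γ - 1) * s ^ (n - γ - 1) * exp (-s) *
              exp (-(t * ‖x - y‖ ^ 2 + s * ‖y‖ ^ 2))) := by
          intro y
          rw [← ENNReal.ofReal_mul (by positivity),
            show -((1 + ‖y‖ ^ 2) * s) = -s + -(s * ‖y‖ ^ 2) by ring,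
            show -(t * ‖x - y‖ ^ 2 + s * ‖y‖ ^ 2) = -(‖x - y‖ ^ 2 * t) + -(s * ‖y‖ ^ 2) by ring,
            exp_add, exp_add]
          ring_nf
        simp_rw [hpt]
        rw [lintegral_ofReal_const_mul _ (by positivity),
          lintegral_exp_neg_mul_norm_sub_sq_add_mul_norm_sq ht hs x,
          ← ENNReal.ofReal_mul (by positivity)]
    _ = ENNReal.ofReal (π ^ (n / 2 : ℝ) * Gamma γ * Gamma (n / 2 - γ) * (1 + ‖x‖ ^ 2) ^ (-γ)) :=
        lintegral_Ioi_lintegral_Ioi_schwinger hγ hγn (by positivity)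
    _ = ENNReal.ofReal (Gamma γ * Gamma (n - γ)) *
          ENNReal.ofReal (bubbleI n γ * (1 + ‖x‖ ^ 2) ^ (-γ)) := by
        rw [← ENNReal.ofReal_mul (by positivity), bubbleI,
          show ((n : ℝ) - 2 * γ) / 2 = n / 2 - γ by ring]
        congr 1
        field_simp

theorem integral_one_add_norm_sq_rpow_neg_div_norm_sub_rpow {γ : ℝ} (hγ : 0 < γ)
    (hγn : 2 * γ < Module.finrank ℝ V) (x : V) :
    ∫ y : V, (1 + ‖y‖ ^ 2) ^ (-(Module.finrank ℝ V - γ)) / ‖x - y‖ ^ (2 * γ) =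
      bubbleI (Module.finrank ℝ V) γ * (1 + ‖x‖ ^ 2) ^ (-γ) := by
  have := bubbleI_pos hγn
  rw [integral_eq_lintegral_of_nonneg_ae (.of_forall fun y => by positivity)
    (by fun_prop : Measurable _).aestronglyMeasurable,
    lintegral_one_add_norm_sq_rpow_neg_div_norm_sub_rpow hγ hγn,
    ENNReal.toReal_ofReal (by positivity)]

end InnerProductSpace

theorem EuclideanSpace.integral_one_add_norm_sq_rpow_neg_div_norm_sub_rpow {n : ℕ} {γ : ℝ}
    (hγ : 0 < γ) (hγn : 2 * γ < n) (x : EuclideanSpace ℝ (Fin n)) :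
    ∫ y : EuclideanSpace ℝ (Fin n), (1 + ‖y‖ ^ 2) ^ (-(n - γ)) / ‖x - y‖ ^ (2 * γ) =
      bubbleI n γ * (1 + ‖x‖ ^ 2) ^ (-γ) := by
  simpa only [finrank_euclideanSpace_fin] using
    _root_.integral_one_add_norm_sq_rpow_neg_div_norm_sub_rpow hγ (by simpa using hγn) x

section Bubble

variable {n : ℕ} {s σ : ℝ}

noncomputable def bubbleConst (n : ℕ) (s σ : ℝ) : ℝ :=
  (rieszConst n (2 * s) * bubbleI n (σ / 2) * bubbleI n (((n : ℝ) - 2 * s) / 2)) ^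
    (-(((n : ℝ) - 2 * s) / (2 * ((n : ℝ) + 2 * s - σ))))

lemma bubbleConst_pos (hs0 : 0 < s) (hs : 2 * s < n) (hσ : σ < n) : 0 < bubbleConst n s σ := by
  have := rieszConst_pos (by linarith : 0 < 2 * s) hs
  have := bubbleI_pos (n := n) (γ := σ / 2) (by linarith)
  have := bubbleI_pos (n := n) (γ := ((n : ℝ) - 2 * s) / 2) (by linarith)
  unfold bubbleConst
  positivity

lemma bubbleQ_rpow (hc : 0 ≤ bubbleConst n s σ) (z : EuclideanSpace ℝ (Fin n)) (p : ℝ) :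
    bubbleQ n s σ z ^ p =
      bubbleConst n s σ ^ p * (1 + ‖z‖ ^ 2) ^ (-(((n : ℝ) - 2 * s) / 2 * p)) := by
  have hz : 0 < 1 + ‖z‖ ^ 2 := by positivity
  rw [bubbleQ, ← bubbleConst, mul_rpow hc (by positivity), ← rpow_mul (by positivity), one_div,
    inv_rpow hz.le, ← rpow_neg hz.le]

lemma integral_bubbleQ_rpow_div_norm_sub_rpow (hs : 2 * s < n) (hσ0 : 0 < σ) (hσ : σ < n)
    (hc : 0 ≤ bubbleConst n s σ) (y : EuclideanSpace ℝ (Fin n)) :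
    ∫ z : EuclideanSpace ℝ (Fin n),
        bubbleQ n s σ z ^ ((2 * (n : ℝ) - σ) / ((n : ℝ) - 2 * s)) / ‖y - z‖ ^ σ =
      bubbleConst n s σ ^ ((2 * (n : ℝ) - σ) / ((n : ℝ) - 2 * s)) * bubbleI n (σ / 2) *
        (1 + ‖y‖ ^ 2) ^ (-(σ / 2)) := by
  have hns : (n : ℝ) - 2 * s ≠ 0 := by linarith
  simp_rw [bubbleQ_rpow hc, mul_div_assoc,
    show ((n : ℝ) - 2 * s) / 2 * ((2 * n - σ) / (n - 2 * s)) = n - σ / 2 by field_simp]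
  have h := EuclideanSpace.integral_one_add_norm_sq_rpow_neg_div_norm_sub_rpow
    (by linarith : 0 < σ / 2) (by linarith) y
  rw [show 2 * (σ / 2) = σ by ring] at h
  rw [integral_const_mul, h, mul_assoc]

lemma rieszConst_mul_bubbleI_mul_bubbleConst_rpow (hs0 : 0 < s) (hs : 2 * s < n) (hσ : σ < n) :
    rieszConst n (2 * s) * bubbleI n (σ / 2) * bubbleI n (((n : ℝ) - 2 * s) / 2) *
        (bubbleConst n s σ ^ ((2 * (n : ℝ) - σ) / ((n : ℝ) - 2 * s)) *
          bubbleConst n s σ ^ (((n : ℝ) + 2 * s - σ) / ((n : ℝ) - 2 * s))) =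
      bubbleConst n s σ := by
  have hX : 0 < rieszConst n (2 * s) * bubbleI n (σ / 2) * bubbleI n (((n : ℝ) - 2 * s) / 2) :=
    mul_pos (mul_pos (rieszConst_pos (by linarith) hs) (bubbleI_pos (by linarith)))
      (bubbleI_pos (by linarith))
  have hns : (n : ℝ) - 2 * s ≠ 0 := by linarith
  have hnsσ : (n : ℝ) + 2 * s - σ ≠ 0 := by linarith
  set e := ((n : ℝ) - 2 * s) / (2 * ((n : ℝ) + 2 * s - σ)) with he_def
  have he : 1 + (-e * ((2 * n - σ) / (n - 2 * s)) + -e * ((n + 2 * s - σ) / (n - 2 * s))) = -e := by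
    rw [he_def]
    field_simp
    ring
  have he₀ : -e ≠ 0 := neg_ne_zero.2 (div_ne_zero hns (mul_ne_zero two_ne_zero hnsσ))
  unfold bubbleConst
  rw [← rpow_mul hX.le, ← rpow_mul hX.le, ← rpow_add hX,
    ← rpow_one_add' hX.le (by rw [he]; exact he₀), he]

end Bubble

theorem stmt_9 (n : ℕ) (s σ : ℝ) (hs0 : 0 < s) (hs : 2 * s < n)
    (hσ0 : 0 < σ) (hσn : σ < n) (x : EuclideanSpace ℝ (Fin n)) :
    bubbleQ n s σ x =
      ∫ y : EuclideanSpace ℝ (Fin n),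
        rieszConst n (2 * s) / ‖x - y‖ ^ ((n : ℝ) - 2 * s) *
        (∫ z : EuclideanSpace ℝ (Fin n),
          bubbleQ n s σ z ^ ((2 * (n : ℝ) - σ) / ((n : ℝ) - 2 * s)) / ‖y - z‖ ^ σ) *
        bubbleQ n s σ y ^ (((n : ℝ) + 2 * s - σ) / ((n : ℝ) - 2 * s)) := by
  have hc := bubbleConst_pos hs0 hs hσn
  have hns : (n : ℝ) - 2 * s ≠ 0 := by linarith
  have hintegrand : ∀ y : EuclideanSpace ℝ (Fin n),
      rieszConst n (2 * s) / ‖x - y‖ ^ ((n : ℝ) - 2 * s) *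
        (∫ z : EuclideanSpace ℝ (Fin n),
          bubbleQ n s σ z ^ ((2 * (n : ℝ) - σ) / ((n : ℝ) - 2 * s)) / ‖y - z‖ ^ σ) *
        bubbleQ n s σ y ^ (((n : ℝ) + 2 * s - σ) / ((n : ℝ) - 2 * s)) =
      rieszConst n (2 * s) * bubbleI n (σ / 2) *
        (bubbleConst n s σ ^ ((2 * (n : ℝ) - σ) / ((n : ℝ) - 2 * s)) *
          bubbleConst n s σ ^ (((n : ℝ) + 2 * s - σ) / ((n : ℝ) - 2 * s))) *
        ((1 + ‖y‖ ^ 2) ^ (-((n : ℝ) - ((n : ℝ) - 2 * s) / 2)) /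
          ‖x - y‖ ^ (2 * (((n : ℝ) - 2 * s) / 2))) := by
    intro y
    rw [integral_bubbleQ_rpow_div_norm_sub_rpow hs hσ0 hσn hc.le, bubbleQ_rpow hc.le,
      show 2 * (((n : ℝ) - 2 * s) / 2) = n - 2 * s by ring,
      show -((n : ℝ) - (n - 2 * s) / 2) =
        -(σ / 2) + -((n - 2 * s) / 2 * ((n + 2 * s - σ) / (n - 2 * s))) by field_simp; ring,
      rpow_add (by positivity)]
    ring
  rw [integral_congr_ae (.of_forall hintegrand), integral_const_mul,
    EuclideanSpace.integral_one_add_norm_sq_rpow_neg_div_norm_sub_rpow (by linarith) (by linarith),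
    bubbleQ, ← bubbleConst, one_div, inv_rpow (by positivity), ← rpow_neg (by positivity)]
  conv_lhs => rw [← rieszConst_mul_bubbleI_mul_bubbleConst_rpow hs0 hs hσn]
  ring
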